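/- The set { ρ ∈ ℝ^N : Σ(ρ) is positive definite } is a convex subset of ℝ^N. -/

import Mathlib

open Matrix

/-!
Writing `Qᵢ` for the matrix `(q i j k)_{j,k}`, one has `Σ(ρ) = ∑ᵢ Qᵢᵀ (diag ρᵢ - ρᵢ ρᵢᵀ) Qᵢ`, and
`c ⬝ (diag ρ - ρ ρᵀ) c = ∑ⱼ cⱼ² ρⱼ - (∑ⱼ cⱼ ρⱼ)²` is a linear function of `ρ` minus the square of
another one. Hence every quadratic form `ρ ↦ x ⬝ Σ(ρ) x` is concave, its strict superlevel set
`{ρ | 0 < x ⬝ Σ(ρ) x}` is convex, and the positive definite locus is the intersection of these sets.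
-/

/-- The K×K covariance matrix `Σ(ρ)`. -/
noncomputable def SigmaMat {I K : ℕ} (n : Fin I → ℕ)
    (q : (i : Fin I) → Fin (n i) → Fin K → ℝ)
    (ρ : (i : Fin I) → Fin (n i) → ℝ) : Matrix (Fin K) (Fin K) ℝ :=
  Matrix.of fun k l => ∑ i, ((∑ j, q i j k * q i j l * ρ i j)
    - (∑ j, q i j k * ρ i j) * (∑ j, q i j l * ρ i j))

open Set

theorem ConcaveOn.finset_sum {𝕜 E β ι : Type*} [Semiring 𝕜] [PartialOrder 𝕜] [AddCommMonoid E]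
    [AddCommMonoid β] [PartialOrder β] [IsOrderedAddMonoid β] [Module 𝕜 E] [Module 𝕜 β]
    {s : Set E} (hs : Convex 𝕜 s) {t : Finset ι} {f : ι → E → β}
    (hf : ∀ i ∈ t, ConcaveOn 𝕜 s (f i)) : ConcaveOn 𝕜 s fun x => ∑ i ∈ t, f i x := by
  classical
  induction t using Finset.induction_on with
  | empty => simpa using concaveOn_const 0 hs
  | insert i t hi ih =>
    simp only [Finset.sum_insert hi]
    exact (hf i (t.mem_insert_self i)).add (ih fun j hj => hf j (Finset.mem_insert_of_mem hj))

lemma convex_setOf_posDef_of_concaveOn {E m : Type*} [AddCommGroup E] [Module ℝ E] [Fintype m]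
    {s : Set E} {M : E → Matrix m m ℝ} (hM : ∀ ρ ∈ s, (M ρ).IsHermitian)
    (hconc : ∀ x, ConcaveOn ℝ s fun ρ => x ⬝ᵥ M ρ *ᵥ x) :
    Convex ℝ {ρ ∈ s | (M ρ).PosDef} := by
  intro ρ ⟨hρs, hρ⟩ σ ⟨hσs, hσ⟩ a b ha hb hab
  have hmem : a • ρ + b • σ ∈ s := (hconc 0).1 hρs hσs ha hb hab
  refine ⟨hmem, .of_dotProduct_mulVec_pos (hM _ hmem) fun x hx => ?_⟩
  have hρx := hρ.dotProduct_mulVec_pos hx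
  have hσx := hσ.dotProduct_mulVec_pos hx
  rw [star_trivial] at hρx hσx ⊢
  exact ((hconc x).convex_gt 0 ⟨hρs, hρx⟩ ⟨hσs, hσx⟩ ha hb hab).2

lemma dotProduct_transpose_mul_mul_mulVec {R l m : Type*} [CommSemiring R] [Fintype l]
    [Fintype m] (A : Matrix l m R) (C : Matrix l l R) (x : m → R) :
    x ⬝ᵥ (Aᵀ * C * A) *ᵥ x = (A *ᵥ x) ⬝ᵥ C *ᵥ (A *ᵥ x) := by
  rw [← mulVec_mulVec, ← mulVec_mulVec, dotProduct_transpose_mulVec, dotProduct_comm]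

section multinomialCov

variable {R J : Type*} [CommRing R] [Fintype J] [DecidableEq J]

/-- The covariance matrix of one multinomial draw with cell probabilities `ρ`. -/
def multinomialCov (ρ : J → R) : Matrix J J R := diagonal ρ - vecMulVec ρ ρ

lemma dotProduct_multinomialCov_mulVec (c ρ : J → R) :
    c ⬝ᵥ multinomialCov ρ *ᵥ c = (c * c) ⬝ᵥ ρ - (c ⬝ᵥ ρ) ^ 2 := by
  rw [multinomialCov, sub_mulVec, dotProduct_sub, vecMulVec_mulVec, dotProduct_smul,
    dotProduct_comm ρ c]
  simp only [dotProduct, mulVec_diagonal, Pi.mul_apply, MulOpposite.smul_eq_mul_unop,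
    MulOpposite.unop_op, sq]
  congr 1
  exact Finset.sum_congr rfl fun j _ => by ring

lemma transpose_mul_multinomialCov_mul {K : Type*} [Fintype K] (Q : Matrix J K R) (ρ : J → R) :
    Qᵀ * multinomialCov ρ * Q = Qᵀ * diagonal ρ * Q - vecMulVec (Qᵀ *ᵥ ρ) (Qᵀ *ᵥ ρ) := by
  rw [multinomialCov, Matrix.mul_sub, Matrix.sub_mul, mul_vecMulVec, vecMulVec_mul,
    mulVec_transpose]

lemma concaveOn_dotProduct_multinomialCov_mulVec (c : J → ℝ) :
    ConcaveOn ℝ univ fun ρ => c ⬝ᵥ multinomialCov ρ *ᵥ c := by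
  have hlin := (dotProductBilin ℝ ℝ (c * c)).concaveOn convex_univ
  have hsq := (even_two.convexOn_pow (𝕜 := ℝ)).comp_linearMap (dotProductBilin ℝ ℝ c)
  rw [preimage_univ] at hsq
  refine (hlin.sub hsq).congr fun ρ _ => ?_
  simp [dotProduct_multinomialCov_mulVec]

end multinomialCov

section SigmaMat

variable {I K : ℕ} (n : Fin I → ℕ) (q : (i : Fin I) → Fin (n i) → Fin K → ℝ)

lemma sigmaMat_eq_sum (ρ : (i : Fin I) → Fin (n i) → ℝ) :
    SigmaMat n q ρ = ∑ i, (of (q i))ᵀ * multinomialCov (ρ i) * of (q i) := by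
  ext k l
  simp [SigmaMat, Matrix.sum_apply, transpose_mul_multinomialCov_mul, mul_apply, diagonal_apply,
    mulVec, dotProduct, vecMulVec_apply, Finset.sum_mul, mul_right_comm]

lemma isHermitian_sigmaMat (ρ : (i : Fin I) → Fin (n i) → ℝ) : (SigmaMat n q ρ).IsHermitian := by
  ext k l
  simp [SigmaMat, mul_comm, mul_left_comm]

lemma concaveOn_dotProduct_sigmaMat_mulVec (x : Fin K → ℝ) :
    ConcaveOn ℝ univ fun ρ => x ⬝ᵥ SigmaMat n q ρ *ᵥ x := by
  simp only [sigmaMat_eq_sum, sum_mulVec, dotProduct_sum, dotProduct_transpose_mul_mul_mulVec]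
  exact ConcaveOn.finset_sum convex_univ fun i _ =>
    (concaveOn_dotProduct_multinomialCov_mulVec (of (q i) *ᵥ x)).comp_linearMap
      (LinearMap.proj (R := ℝ) (φ := fun i => Fin (n i) → ℝ) i)

end SigmaMat

/-- the set `{ ρ ∈ ℝ^N : Σ(ρ) is positive definite }` is convex. -/
theorem stmt5 {I K : ℕ} (n : Fin I → ℕ)
    (q : (i : Fin I) → Fin (n i) → Fin K → ℝ) :
    Convex ℝ {ρ : (i : Fin I) → Fin (n i) → ℝ | (SigmaMat n q ρ).PosDef} := by
  simpa using convex_setOf_posDef_of_concaveOn (fun ρ _ => isHermitian_sigmaMat n q ρ)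
    (concaveOn_dotProduct_sigmaMat_mulVec n q)
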